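/- The population quantile minimizes expected check loss: if X is integrable with distribution function F continuous at q, and F(q) = α, then for every v ∈ ℝ, E[π_α(X − v)] ≥ E[π_α(X − q)], where π_α(u) = u(α − 1[u < 0]). -/

import Mathlib

open MeasureTheory

/-- Check function π_a(u) = u(a − 1[u < 0]). -/
noncomputable def check (a u : ℝ) : ℝ := u * (a - if u < 0 then (1 : ℝ) else 0)

/-!
Since `check a u = a * u - min u 0` is convex with subgradient `a - 1[u < 0]` at `u`, every
`v` satisfies `E[check α (X - v)] ≥ E[check α (X - q)] + (q - v) (α - P(X < q))`. Continuity of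
the distribution function at `q` gives `P(X < q) = F(q) = α`, so the correction term vanishes.
-/

lemma check_eq_mul_sub_min (a u : ℝ) : check a u = a * u - min u 0 := by
  unfold check
  split_ifs with h
  · rw [min_eq_left h.le]; ring
  · rw [min_eq_right (not_lt.mp h)]; ring

lemma check_add_mul_le (a u w : ℝ) :
    check a u + (w - u) * (a - if u < 0 then 1 else 0) ≤ check a w := by
  unfold check
  split_ifs with hu hw hw
  · nlinarith
  · nlinarith [not_lt.mp hw]
  · nlinarith [not_lt.mp hu]
  · nlinarith

section Expectation

variable {Ω : Type*} [MeasurableSpace Ω] {μ : Measure Ω} {X : Ω → ℝ}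

lemma integrable_check_sub [IsFiniteMeasure μ] (hX : Integrable X μ) (a c : ℝ) :
    Integrable (fun ω => check a (X ω - c)) μ := by
  simp only [check_eq_mul_sub_min]
  have hXc : Integrable (fun ω => X ω - c) μ := hX.sub (integrable_const c)
  exact (hXc.const_mul a).sub (hXc.inf (integrable_const 0))

lemma integral_check_add_mul_le [IsFiniteMeasure μ] (hX : Integrable X μ) (a c v : ℝ) :
    ∫ ω, check a (X ω - c) ∂μ + (c - v) * (a * μ.real Set.univ - μ.real {ω | X ω < c})
      ≤ ∫ ω, check a (X ω - v) ∂μ := by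
  have hs : NullMeasurableSet {ω | X ω < c} μ :=
    nullMeasurableSet_lt hX.aemeasurable aemeasurable_const
  have hind_eq : (fun ω => if X ω - c < 0 then (1 : ℝ) else 0) = {ω | X ω < c}.indicator 1 := by
    ext ω
    simp [Set.indicator_apply]
  have hind : Integrable (fun ω => if X ω - c < 0 then (1 : ℝ) else 0) μ := by
    rw [hind_eq]
    exact (integrable_const 1).indicator₀ hs
  have hsub : Integrable (fun ω => (c - v) * (a - if X ω - c < 0 then (1 : ℝ) else 0)) μ :=
    ((integrable_const a).sub hind).const_mul _
  have hind_integral : ∫ ω, (if X ω - c < 0 then (1 : ℝ) else 0) ∂μ = μ.real {ω | X ω < c} := by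
    rw [hind_eq, integral_indicator₀ hs]
    simp
  calc ∫ ω, check a (X ω - c) ∂μ + (c - v) * (a * μ.real Set.univ - μ.real {ω | X ω < c})
      = ∫ ω, (check a (X ω - c) + (c - v) * (a - if X ω - c < 0 then 1 else 0)) ∂μ := by
        rw [integral_add (integrable_check_sub hX a c) hsub, integral_const_mul,
          integral_sub (integrable_const a) hind, hind_integral, integral_const, smul_eq_mul,
          mul_comm a]
    _ ≤ ∫ ω, check a (X ω - v) ∂μ := by
        refine integral_mono ((integrable_check_sub hX a c).add hsub)
          (integrable_check_sub hX a v) fun ω => ?_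
        simpa only [sub_sub_sub_cancel_left] using check_add_mul_le a (X ω - c) (X ω - v)

lemma measureReal_lt_eq_of_continuousWithinAt [IsFiniteMeasure μ] {q : ℝ}
    (hcont : ContinuousWithinAt (fun v => μ.real {ω | X ω ≤ v}) (Set.Iio q) q) :
    μ.real {ω | X ω < q} = μ.real {ω | X ω ≤ q} := by
  refine le_antisymm (measureReal_mono (Set.ofPred_subset_ofPred.mpr fun _ h => h.le))
    (le_of_tendsto hcont ?_)
  filter_upwards [self_mem_nhdsWithin] with x hx
  exact measureReal_mono (Set.ofPred_subset_ofPred.mpr fun _ h => h.trans_lt hx)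

end Expectation

theorem stmt_13_general {Ω : Type*} [MeasurableSpace Ω] (μ : Measure Ω) [IsProbabilityMeasure μ]
    (X : Ω → ℝ) (hXi : Integrable X μ)
    (α : ℝ) (q : ℝ)
    (hcont : ContinuousAt (fun v => (μ {ω | X ω ≤ v}).toReal) q)
    (hq : (μ {ω | X ω ≤ q}).toReal = α) :
    ∀ v : ℝ, (∫ ω, check α (X ω - q) ∂μ) ≤ ∫ ω, check α (X ω - v) ∂μ := by
  intro v
  have hlt : μ.real {ω | X ω < q} = α :=
    (measureReal_lt_eq_of_continuousWithinAt hcont.continuousWithinAt).trans hq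
  simpa [hlt] using integral_check_add_mul_le hXi α q v

/-- The population quantile minimizes expected check loss: if X is integrable with
distribution function F continuous at q and F(q) = α, then for every v,
E[π_α(X − v)] ≥ E[π_α(X − q)]. -/
theorem stmt_13 {Ω : Type*} [MeasurableSpace Ω] (μ : Measure Ω) [IsProbabilityMeasure μ]
    (X : Ω → ℝ) (hXm : Measurable X) (hXi : Integrable X μ)
    (α : ℝ) (hα : α ∈ Set.Ioo (0 : ℝ) 1) (q : ℝ)
    (hcont : ContinuousAt (fun v => (μ {ω | X ω ≤ v}).toReal) q)
    (hq : (μ {ω | X ω ≤ q}).toReal = α) :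
    ∀ v : ℝ, (∫ ω, check α (X ω - q) ∂μ) ≤ ∫ ω, check α (X ω - v) ∂μ :=
  stmt_13_general μ X hXi α q hcont hq
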